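/- arXiv:1705.00101 — 6 statements merged into one kernel-verified Lean document; each statement's English description precedes it below -/
import Mathlib

section
/- Let (Ω, F, P) be a probability space satisfying the hypotheses below. Then lim_{|x| → ∞} liminf_{n → ∞} (1/n) · Σ_{k=1}^{n} P( t((k−1)x) ≤ t(kx) ) = 1, where the limit as |x| → ∞ is along the cofinite filter on ℤ^d (i.e. for every ε > 0 there is R such that liminf_{n → ∞} (1/n) · Σ_{k=1}^{n} P( t((k−1)x) ≤ t(kx) ) > 1 − ε whenever |x| ≥ R). (This is the first statement of Theorem 1.1, Uniformity of hitting times, stated with all properties of the contact process hitting times that the proof uses carried as explicit hypotheses.) -/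
/-!
Write `F n = E[t(n x)]` and `p k = P(t((k-1)x) ≤ t(kx))`. Splitting `t((k+1)x)` at the essential
hitting time `σ(kx)` and applying the renewal bound gives
`F (k+1) - F k ≤ C₁ + P(σ(kx) ≤ t((k+1)x)) E[t(x)] ≤ C₁ + p (k+1) E[t(x)]`, since `t ≤ σ`.
Telescoping and dividing by `n E[t(x)]` bounds the Cesàro means of `p` from below by a sequence
tending to `(μ(x) - C₁) / E[t(x)]`, and the shape theorem sends this bound to `1` as `|x| → ∞`.
-/

open MeasureTheory Filter Finset

/-- The 1-norm of a point of `ℤ^d`. -/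
def onorm {d : ℕ} (x : Fin d → ℤ) : ℕ := ∑ i, (x i).natAbs

noncomputable def cesaroAvg (q : ℕ → ℝ) (n : ℕ) : ℝ := (1 / (n : ℝ)) * ∑ k ∈ Icc 1 n, q k

section Cesaro

variable {q : ℕ → ℝ}

theorem cesaroAvg_nonneg (hq : ∀ k, 0 ≤ q k) (n : ℕ) : 0 ≤ cesaroAvg q n :=
  mul_nonneg (by positivity) (sum_nonneg fun k _ => hq k)

theorem cesaroAvg_le {b : ℝ} (hb : 0 ≤ b) (hq : ∀ k, q k ≤ b) (n : ℕ) : cesaroAvg q n ≤ b := by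
  rcases Nat.eq_zero_or_pos n with rfl | hn
  · simpa [cesaroAvg] using hb
  calc cesaroAvg q n ≤ (1 / (n : ℝ)) * ∑ _k ∈ Icc 1 n, b :=
        mul_le_mul_of_nonneg_left (sum_le_sum fun k _ => hq k) (by positivity)
    _ = b := by rw [sum_const, Nat.card_Icc, Nat.add_sub_cancel, nsmul_eq_mul]; field_simp

theorem liminf_cesaroAvg_le_one (hq₀ : ∀ k, 0 ≤ q k) (hq₁ : ∀ k, q k ≤ 1) :
    liminf (cesaroAvg q) atTop ≤ 1 :=
  liminf_le_of_frequently_le (.of_forall (cesaroAvg_le zero_le_one hq₁))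
    (isBoundedUnder_of ⟨0, cesaroAvg_nonneg hq₀⟩)

theorem le_liminf_cesaroAvg_of_increment_le {F : ℕ → ℝ} {C T m : ℝ} (hT : 0 < T)
    (hq : ∀ k, q k ≤ 1) (hinc : ∀ k, F (k + 1) - F k ≤ C + q (k + 1) * T)
    (hF : Tendsto (fun n : ℕ => F n / n) atTop (nhds m)) :
    (m - C) / T ≤ liminf (cesaroAvg q) atTop := by
  have htelescope : ∀ n : ℕ, F n - F 0 ≤ n * C + (∑ k ∈ Icc 1 n, q k) * T := by
    intro n
    induction n with
    | zero => simp
    | succ n ih =>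
      rw [sum_Icc_succ_top (by omega)]
      push_cast
      linarith [hinc n]
  have hlower : ∀ n ≥ 1, (F n / n - F 0 / n - C) / T ≤ cesaroAvg q n := by
    intro n hn
    have hn : (0 : ℝ) < n := by exact_mod_cast hn
    rw [div_le_iff₀ hT, cesaroAvg]
    calc F n / n - F 0 / n - C = (F n - F 0 - n * C) / n := by field_simp
      _ ≤ (∑ k ∈ Icc 1 n, q k) * T / n := by gcongr; linarith [htelescope n]
      _ = 1 / n * (∑ k ∈ Icc 1 n, q k) * T := by ring
  have hlim : Tendsto (fun n : ℕ => (F n / n - F 0 / n - C) / T) atTop (nhds ((m - C) / T)) := by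
    simpa using ((hF.sub (tendsto_const_div_atTop_nhds_zero_nat (F 0))).sub_const C).div_const T
  rw [← hlim.liminf_eq]
  exact liminf_le_liminf ((eventually_ge_atTop 1).mono hlower) hlim.isBoundedUnder_ge
    (isCoboundedUnder_ge_of_le _ (cesaroAvg_le zero_le_one hq))

end Cesaro

theorem integral_le_integral_add_setIntegral_sub {Ω : Type*} [MeasurableSpace Ω] {P : Measure Ω}
    {f g : Ω → ℝ} (hf : Integrable f P) (hg : Integrable g P) :
    ∫ ω, f ω ∂P ≤ ∫ ω, g ω ∂P + ∫ ω in {ω | g ω ≤ f ω}, (f ω - g ω) ∂P := by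
  set S := {ω | g ω ≤ f ω}
  have hS : NullMeasurableSet S P := nullMeasurableSet_le hg.aemeasurable hf.aemeasurable
  have hpointwise : ∀ ω, f ω ≤ g ω + S.indicator (fun ω => f ω - g ω) ω := by
    intro ω
    by_cases h : g ω ≤ f ω
    · rw [Set.indicator_of_mem (show ω ∈ S from h)]
      linarith
    · rw [Set.indicator_of_notMem (show ω ∉ S from h)]
      linarith [not_le.mp h]
  have hind : Integrable (S.indicator fun ω => f ω - g ω) P := (hf.sub hg).indicator₀ hS
  calc ∫ ω, f ω ∂P ≤ ∫ ω, (g ω + S.indicator (fun ω => f ω - g ω) ω) ∂P :=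
        integral_mono hf (hg.add hind) hpointwise
    _ = _ := by rw [integral_add hg hind, integral_indicator₀ hS]

theorem integral_le_of_renewal {Ω ι : Type*} [MeasurableSpace Ω] [AddGroup ι] {P : Measure Ω}
    [IsFiniteMeasure P] {t σ : ι → Ω → ℝ}
    (ht_int : ∀ x, Integrable (t x) P) (hσ_int : ∀ x, Integrable (σ x) P)
    (hrenewal : ∀ x y, ∫ ω in {ω | σ y ω ≤ t x ω}, (t x ω - σ y ω) ∂P
      ≤ (P {ω | σ y ω ≤ t x ω}).toReal * ∫ ω, t (x - y) ω ∂P)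
    (htσ : ∀ y, ∀ᵐ ω ∂P, t y ω ≤ σ y ω)
    {C₁ : ℝ} (hC₁ : ∀ y, ∫ ω, (σ y ω - t y ω) ∂P ≤ C₁)
    {x y : ι} (hxy : 0 ≤ ∫ ω, t (x - y) ω ∂P) :
    ∫ ω, t x ω ∂P ≤ ∫ ω, t y ω ∂P + C₁ + (P {ω | t y ω ≤ t x ω}).toReal * ∫ ω, t (x - y) ω ∂P := by
  have hsplit := integral_le_integral_add_setIntegral_sub (ht_int x) (hσ_int y)
  have hσ_le : ∫ ω, σ y ω ∂P ≤ ∫ ω, t y ω ∂P + C₁ := by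
    linarith [hC₁ y, integral_sub (hσ_int y) (ht_int y)]
  have hprob : (P {ω | σ y ω ≤ t x ω}).toReal ≤ (P {ω | t y ω ≤ t x ω}).toReal := by
    refine ENNReal.toReal_mono (measure_ne_top P _) (measure_mono_ae ?_)
    filter_upwards [htσ y] with ω hω hσ
    exact hω.trans hσ
  linarith [hrenewal x y, mul_le_mul_of_nonneg_right hprob hxy]

theorem tendsto_sub_div_of_div_tendsto_one {α : Type*} {l : Filter α} {μ T : α → ℝ} (C : ℝ)
    (hμ : Tendsto μ l atTop) (hT : Tendsto (fun x => T x / μ x) l (nhds 1)) :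
    Tendsto (fun x => (μ x - C) / T x) l (nhds 1) := by
  have hlim : Tendsto (fun x => (1 - C / μ x) * (T x / μ x)⁻¹) l (nhds ((1 - 0) * 1⁻¹)) :=
    (tendsto_const_nhds.sub (tendsto_const_nhds.div_atTop hμ)).mul (hT.inv₀ one_ne_zero)
  rw [sub_zero, inv_one, mul_one] at hlim
  refine hlim.congr' ?_
  filter_upwards [hμ.eventually_ne_atTop 0] with x hx
  rw [inv_div, ← mul_div_assoc, sub_mul, div_mul_cancel₀ _ hx, one_mul]

theorem stmt_0_general
    {Ω : Type*} [MeasurableSpace Ω] (P : Measure Ω) [IsProbabilityMeasure P]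
    (d : ℕ)
    (t σ : (Fin d → ℤ) → Ω → ℝ)
    (ht_int : ∀ x, Integrable (t x) P) (hσ_int : ∀ x, Integrable (σ x) P)
    -- (i) the renewal bound of Lemma 3.1
    (hrenewal : ∀ x y, ∫ ω in {ω | σ y ω ≤ t x ω}, (t x ω - σ y ω) ∂P
      ≤ (P {ω | σ y ω ≤ t x ω}).toReal * ∫ ω, t (x - y) ω ∂P)
    -- (ii) t ≤ σ a.s. and uniform bound on E[σ - t]
    (htσ : ∀ y, ∀ᵐ ω ∂P, t y ω ≤ σ y ω)
    (C₁ : ℝ) (hC₁ : ∀ y, ∫ ω, (σ y ω - t y ω) ∂P ≤ C₁)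
    -- (iii) normalized expected hitting times converge
    (μ : (Fin d → ℤ) → ℝ)
    (hμ : ∀ x, Tendsto (fun n : ℕ => (∫ ω, t (n • x) ω ∂P) / n) atTop (nhds (μ x)))
    -- (iv) the shape theorem (Lemma 3.2)
    (hμ_inf : Tendsto μ cofinite atTop)
    (hshape : Tendsto (fun x => (∫ ω, t x ω ∂P) / μ x) cofinite (nhds 1)) :
    Tendsto (fun x : Fin d → ℤ => liminf (fun n : ℕ =>
        (1 / (n : ℝ)) * ∑ k ∈ Finset.Icc 1 n,
          (P {ω | t ((k - 1) • x) ω ≤ t (k • x) ω}).toReal) atTop)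
      cofinite (nhds 1) := by
  have hpos : ∀ᶠ x in cofinite, 0 < ∫ ω, t x ω ∂P := by
    filter_upwards [hμ_inf.eventually_gt_atTop 0, hshape.eventually (lt_mem_nhds one_pos)]
      with x hμx hratio
    exact (div_pos_iff_of_pos_right hμx).mp hratio
  refine tendsto_of_tendsto_of_tendsto_of_le_of_le' (tendsto_sub_div_of_div_tendsto_one C₁ hμ_inf
    hshape) tendsto_const_nhds ?_ (.of_forall fun _ => liminf_cesaroAvg_le_one
      (fun _ => ENNReal.toReal_nonneg) (fun _ => measureReal_le_one))
  filter_upwards [hpos] with x hx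
  refine le_liminf_cesaroAvg_of_increment_le hx (fun _ => measureReal_le_one)
    (fun k => ?_) (hμ x)
  have hstep := integral_le_of_renewal (x := (k + 1) • x) (y := k • x) ht_int hσ_int hrenewal htσ
    hC₁ (by rw [succ_nsmul, add_sub_cancel_left]; exact hx.le)
  simp only [succ_nsmul, add_sub_cancel_left, Nat.add_sub_cancel] at hstep ⊢
  linarith

/-- First statement of Theorem 1.1 (Uniformity of hitting times):
`lim_{|x|→∞} liminf_{n→∞} (1/n) ∑_{k=1}^n P(t((k-1)x) ≤ t(kx)) = 1`,
the limit in `x` being along the cofinite filter on `ℤ^d`. -/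
theorem stmt_0
    {Ω : Type*} [MeasurableSpace Ω] (P : Measure Ω) [IsProbabilityMeasure P]
    (d : ℕ) (hd : 1 ≤ d)
    (t σ : (Fin d → ℤ) → Ω → ℝ)
    (ht_meas : ∀ x, Measurable (t x)) (hσ_meas : ∀ x, Measurable (σ x))
    (ht_nonneg : ∀ x ω, 0 ≤ t x ω) (hσ_nonneg : ∀ x ω, 0 ≤ σ x ω)
    (ht_int : ∀ x, Integrable (t x) P) (hσ_int : ∀ x, Integrable (σ x) P)
    -- (i) the renewal bound of Lemma 3.1
    (hrenewal : ∀ x y, ∫ ω in {ω | σ y ω ≤ t x ω}, (t x ω - σ y ω) ∂P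
      ≤ (P {ω | σ y ω ≤ t x ω}).toReal * ∫ ω, t (x - y) ω ∂P)
    -- (ii) t ≤ σ a.s. and uniform bound on E[σ - t]
    (htσ : ∀ y, ∀ᵐ ω ∂P, t y ω ≤ σ y ω)
    (C₁ : ℝ) (hC₁ : ∀ y, ∫ ω, (σ y ω - t y ω) ∂P ≤ C₁)
    -- (iii) normalized expected hitting times converge
    (μ : (Fin d → ℤ) → ℝ) (hμ_nonneg : ∀ x, 0 ≤ μ x)
    (hμ : ∀ x, Tendsto (fun n : ℕ => (∫ ω, t (n • x) ω ∂P) / n) atTop (nhds (μ x)))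
    -- (iv) the shape theorem (Lemma 3.2)
    (hμ_inf : Tendsto μ cofinite atTop)
    (hshape : Tendsto (fun x => (∫ ω, t x ω ∂P) / μ x) cofinite (nhds 1)) :
    Tendsto (fun x : Fin d → ℤ => liminf (fun n : ℕ =>
        (1 / (n : ℝ)) * ∑ k ∈ Finset.Icc 1 n,
          (P {ω | t ((k - 1) • x) ω ≤ t (k • x) ω}).toReal) atTop)
      cofinite (nhds 1) :=
  stmt_0_general P d t σ ht_int hσ_int hrenewal htσ C₁ hC₁ μ hμ hμ_inf hshape
end

section
/- Let (Ω, F, P) be a probability space satisfying the hypotheses below. Then lim_{|x| → ∞} liminf_{n → ∞} (1/n) · #{ k ∈ {1, …, n} : E[t((k−1)x)] ≤ E[t(kx)] } = 1, where the limit as |x| → ∞ is along the cofinite filter on ℤ^d (i.e. for every ε > 0 there is R such that liminf_{n → ∞} (1/n) · #{ k ∈ {1, …, n} : E[t((k−1)x)] ≤ E[t(kx)] } > 1 − ε whenever |x| ≥ R). (This is the second statement of Theorem 1.1, Uniformity of hitting times, stated with all properties of the contact process hitting times that the proof uses carried as explicit hypotheses.) -/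
/-!
The renewal bound and the bound on `E[σ - t]` give `E t((k+1)x) ≤ E t(kx) + M(x)` with
`M(x) = C₁ + E t(x)`. Along `a_k = E t(kx)`, a step that does not decrease raises `a` by at most
`M(x)` and every other step lowers it, so among the first `n` steps at least `(a_n - a_0) / M(x)`
do not decrease. Dividing by `n`, the liminf of the fraction of such steps is at least
`μ(x) / M(x)`, and this tends to `1` as `|x| → ∞` by the shape theorem.
-/

open MeasureTheory Filter Finset

open scoped Topology

section Renewal

variable {Ω : Type*} [MeasurableSpace Ω] {P : Measure Ω} [IsProbabilityMeasure P]

theorem integral_le_add_of_setIntegral_sub_le {X Y Z : Ω → ℝ}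
    (hX : Integrable X P) (hY : Integrable Y P) (hZ : 0 ≤ ∫ ω, Z ω ∂P)
    (hrenewal : ∫ ω in {ω | Y ω ≤ X ω}, (X ω - Y ω) ∂P
      ≤ (P {ω | Y ω ≤ X ω}).toReal * ∫ ω, Z ω ∂P) :
    ∫ ω, X ω ∂P ≤ ∫ ω, Y ω ∂P + ∫ ω, Z ω ∂P := by
  set S : Set Ω := {ω | Y ω ≤ X ω}
  have hS : NullMeasurableSet S P := hY.1.nullMeasurableSet_le hX.1
  have hon : ∫ ω in S, (X ω - Y ω) ∂P ≤ ∫ ω, Z ω ∂P :=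
    hrenewal.trans (mul_le_of_le_one_left hZ measureReal_le_one)
  have hoff : ∫ ω in Sᶜ, (X ω - Y ω) ∂P ≤ 0 :=
    setIntegral_nonpos_of_ae_restrict <| (ae_restrict_mem₀ hS.compl).mono fun ω hω =>
      sub_nonpos.2 (not_le.1 (show ¬Y ω ≤ X ω from hω)).le
  have hsplit :
      ∫ ω in S, (X ω - Y ω) ∂P + ∫ ω in Sᶜ, (X ω - Y ω) ∂P = ∫ ω, (X ω - Y ω) ∂P :=
    integral_add_compl₀ hS (hX.sub hY)
  rw [integral_sub hX hY] at hsplit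
  linarith

end Renewal

section NondecreasingSteps

noncomputable def nondecFraction (a : ℕ → ℝ) (n : ℕ) : ℝ :=
  (1 / (n : ℝ)) * #{k ∈ Icc 1 n | a (k - 1) ≤ a k}

variable {a : ℕ → ℝ}

theorem nondecFraction_nonneg (n : ℕ) : 0 ≤ nondecFraction a n := by
  unfold nondecFraction
  positivity

theorem nondecFraction_le_one (n : ℕ) : nondecFraction a n ≤ 1 := by
  unfold nondecFraction
  rcases Nat.eq_zero_or_pos n with rfl | hn
  · simp
  · have hcard : (#{k ∈ Icc 1 n | a (k - 1) ≤ a k} : ℝ) ≤ n := by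
      exact_mod_cast (card_filter_le _ _).trans (Nat.card_Icc 1 n).le
    rw [one_div_mul_eq_div]
    exact div_le_one_of_le₀ hcard n.cast_nonneg

theorem liminf_nondecFraction_le_one : liminf (nondecFraction a) atTop ≤ 1 :=
  liminf_le_of_frequently_le (Frequently.of_forall nondecFraction_le_one)
    (isBoundedUnder_of ⟨0, nondecFraction_nonneg⟩)

theorem le_add_card_nondec_mul {M : ℝ} (hstep : ∀ k, a (k + 1) ≤ a k + M) (n : ℕ) :
    a n ≤ a 0 + #{k ∈ Icc 1 n | a (k - 1) ≤ a k} * M := by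
  induction n with
  | zero => simp
  | succ n ih =>
    rw [← insert_Icc_right_eq_Icc_add_one (by omega), filter_insert, Nat.add_sub_cancel]
    split_ifs with hup
    · rw [card_insert_of_notMem (by simp)]
      push_cast
      linarith [hstep n]
    · linarith [not_le.1 hup]

theorem div_le_liminf_nondecFraction {M L : ℝ} (hM : 0 < M) (hstep : ∀ k, a (k + 1) ≤ a k + M)
    (hlim : Tendsto (fun n : ℕ => a n / n) atTop (𝓝 L)) :
    L / M ≤ liminf (nondecFraction a) atTop := by
  set r : ℕ → ℝ := fun n => (a n / n - a 0 / n) / M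
  have hr : Tendsto r atTop (𝓝 (L / M)) := by
    simpa using (hlim.sub (tendsto_const_div_atTop_nhds_zero_nat (a 0))).div_const M
  have hr_le : ∀ n ≥ 1, r n ≤ nondecFraction a n := by
    intro n hn
    have hn : (0 : ℝ) < n := by exact_mod_cast hn
    have := le_add_card_nondec_mul hstep n
    simp only [r, nondecFraction, div_le_iff₀ hM, ← sub_div, div_le_iff₀ hn]
    field_simp
    linarith
  rw [← hr.liminf_eq]
  exact liminf_le_liminf (eventually_atTop.2 ⟨1, hr_le⟩) hr.isBoundedUnder_ge
    (isBoundedUnder_of ⟨1, fun _ => nondecFraction_le_one _⟩).isCoboundedUnder_ge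

end NondecreasingSteps

theorem tendsto_div_const_add_of_tendsto_div {α : Type*} {l : Filter α} {f g : α → ℝ} (c : ℝ)
    (hg : Tendsto g l atTop) (hfg : Tendsto (fun x => f x / g x) l (𝓝 1)) :
    Tendsto (fun x => g x / (c + f x)) l (𝓝 1) := by
  have hsum : Tendsto (fun x => c / g x + f x / g x) l (𝓝 (0 + 1)) :=
    (tendsto_const_nhds.div_atTop hg).add hfg
  have hinv := hsum.inv₀ (by norm_num)
  rw [zero_add, inv_one] at hinv
  refine hinv.congr' ?_
  filter_upwards [hg.eventually_ne_atTop 0] with x _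
  rw [← add_div, inv_div]

theorem stmt_1_general
    {Ω : Type*} [MeasurableSpace Ω] (P : Measure Ω) [IsProbabilityMeasure P]
    (d : ℕ)
    (t σ : (Fin d → ℤ) → Ω → ℝ)
    (ht_nonneg : ∀ x ω, 0 ≤ t x ω)
    (ht_int : ∀ x, Integrable (t x) P) (hσ_int : ∀ x, Integrable (σ x) P)
    -- (i) the renewal bound of Lemma 3.1
    (hrenewal : ∀ x y, ∫ ω in {ω | σ y ω ≤ t x ω}, (t x ω - σ y ω) ∂P
      ≤ (P {ω | σ y ω ≤ t x ω}).toReal * ∫ ω, t (x - y) ω ∂P)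
    -- (ii) t ≤ σ a.s. and uniform bound on E[σ - t]
    (C₁ : ℝ) (hC₁ : ∀ y, ∫ ω, (σ y ω - t y ω) ∂P ≤ C₁)
    -- (iii) normalized expected hitting times converge
    (μ : (Fin d → ℤ) → ℝ)
    (hμ : ∀ x, Tendsto (fun n : ℕ => (∫ ω, t (n • x) ω ∂P) / n) atTop (nhds (μ x)))
    -- (iv) the shape theorem (Lemma 3.2)
    (hμ_inf : Tendsto μ cofinite atTop)
    (hshape : Tendsto (fun x => (∫ ω, t x ω ∂P) / μ x) cofinite (nhds 1)) :
    Tendsto (fun x : Fin d → ℤ => liminf (fun n : ℕ =>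
        (1 / (n : ℝ)) * ((Finset.Icc 1 n).filter (fun k =>
          ∫ ω, t ((k - 1) • x) ω ∂P ≤ ∫ ω, t (k • x) ω ∂P)).card) atTop)
      cofinite (nhds 1) := by
  change Tendsto (fun x => liminf (nondecFraction fun k => ∫ ω, t (k • x) ω ∂P) atTop)
    cofinite (𝓝 1)
  have hstep : ∀ x (k : ℕ),
      ∫ ω, t ((k + 1) • x) ω ∂P ≤ ∫ ω, t (k • x) ω ∂P + (C₁ + ∫ ω, t x ω ∂P) := by
    intro x k
    have hσ := hC₁ (k • x)
    rw [integral_sub (hσ_int _) (ht_int _)] at hσ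
    have ht := integral_le_add_of_setIntegral_sub_le (ht_int _) (hσ_int _)
      (integral_nonneg (ht_nonneg _)) (hrenewal ((k + 1) • x) (k • x))
    rw [succ_nsmul] at ht ⊢
    rw [add_sub_cancel_left] at ht
    linarith
  have hratio := tendsto_div_const_add_of_tendsto_div C₁ hμ_inf hshape
  have hlower : ∀ᶠ x in cofinite, μ x / (C₁ + ∫ ω, t x ω ∂P)
      ≤ liminf (nondecFraction fun k => ∫ ω, t (k • x) ω ∂P) atTop := by
    filter_upwards [hμ_inf.eventually_gt_atTop 0, hratio.eventually (lt_mem_nhds one_pos)]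
      with x hμx hpos
    exact div_le_liminf_nondecFraction ((div_pos_iff_of_pos_left hμx).1 hpos) (hstep x) (hμ x)
  exact tendsto_of_tendsto_of_tendsto_of_le_of_le' hratio tendsto_const_nhds hlower
    (Eventually.of_forall fun _ => liminf_nondecFraction_le_one)

/-- First statement of Theorem 1.1 (Uniformity of hitting times):
`lim_{|x|→∞} liminf_{n→∞} (1/n) ∑_{k=1}^n P(t((k-1)x) ≤ t(kx)) = 1`,
the limit in `x` being along the cofinite filter on `ℤ^d`. -/
theorem stmt_1
    {Ω : Type*} [MeasurableSpace Ω] (P : Measure Ω) [IsProbabilityMeasure P]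
    (d : ℕ) (hd : 1 ≤ d)
    (t σ : (Fin d → ℤ) → Ω → ℝ)
    (ht_meas : ∀ x, Measurable (t x)) (hσ_meas : ∀ x, Measurable (σ x))
    (ht_nonneg : ∀ x ω, 0 ≤ t x ω) (hσ_nonneg : ∀ x ω, 0 ≤ σ x ω)
    (ht_int : ∀ x, Integrable (t x) P) (hσ_int : ∀ x, Integrable (σ x) P)
    -- (i) the renewal bound of Lemma 3.1
    (hrenewal : ∀ x y, ∫ ω in {ω | σ y ω ≤ t x ω}, (t x ω - σ y ω) ∂P
      ≤ (P {ω | σ y ω ≤ t x ω}).toReal * ∫ ω, t (x - y) ω ∂P)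
    -- (ii) t ≤ σ a.s. and uniform bound on E[σ - t]
    (htσ : ∀ y, ∀ᵐ ω ∂P, t y ω ≤ σ y ω)
    (C₁ : ℝ) (hC₁ : ∀ y, ∫ ω, (σ y ω - t y ω) ∂P ≤ C₁)
    -- (iii) normalized expected hitting times converge
    (μ : (Fin d → ℤ) → ℝ) (hμ_nonneg : ∀ x, 0 ≤ μ x)
    (hμ : ∀ x, Tendsto (fun n : ℕ => (∫ ω, t (n • x) ω ∂P) / n) atTop (nhds (μ x)))
    -- (iv) the shape theorem (Lemma 3.2)
    (hμ_inf : Tendsto μ cofinite atTop)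
    (hshape : Tendsto (fun x => (∫ ω, t x ω ∂P) / μ x) cofinite (nhds 1)) :
    Tendsto (fun x : Fin d → ℤ => liminf (fun n : ℕ =>
        (1 / (n : ℝ)) * ((Finset.Icc 1 n).filter (fun k =>
          ∫ ω, t ((k - 1) • x) ω ∂P ≤ ∫ ω, t (k • x) ω ∂P)).card) atTop)
      cofinite (nhds 1) :=
  stmt_1_general P d t σ ht_nonneg ht_int hσ_int hrenewal C₁ hC₁ μ hμ hμ_inf hshape
end

section
/- Let (Ω, F, P) be a probability space satisfying the hypotheses below, with p ≥ 1 fixed. Then sup over all pairs x ≠ y in ℤ^d of E[ |t(x) − t(y)|^p ] / |x − y|^p is finite. (This is the moment bound of Theorem 1.2, Tightness, stated with all properties of the contact process hitting times that the proof uses carried as explicit hypotheses.) -/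
open MeasureTheory Filter Finset

lemma onorm_eq_zero {d : ℕ} {x : Fin d → ℤ} (h : onorm x = 0) : x = 0 := by
  funext i
  have := Finset.sum_eq_zero_iff.mp h i (Finset.mem_univ i)
  simpa [Int.natAbs_eq_zero] using this

lemma onorm_neg {d : ℕ} (x : Fin d → ℤ) : onorm (-x) = onorm x := by
  simp [onorm]

lemma two_rpow_aux {p : ℝ} (hp : 1 ≤ p) {a b : ℝ} (ha : 0 ≤ a) (hb : 0 ≤ b) :
    (a + b) ^ p ≤ 2 ^ p * (a ^ p + b ^ p) := by
  have hp0 : (0:ℝ) ≤ p := by linarith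
  have h1 : a + b ≤ 2 * max a b := by
    rcases le_total a b with h | h
    · have : max a b = b := max_eq_right h
      rw [this]; linarith
    · have : max a b = a := max_eq_left h
      rw [this]; linarith
  have hmax : 0 ≤ max a b := le_max_of_le_left ha
  calc (a + b) ^ p ≤ (2 * max a b) ^ p :=
        Real.rpow_le_rpow (by linarith) h1 hp0
    _ = 2 ^ p * (max a b) ^ p := Real.mul_rpow (by norm_num) hmax
    _ ≤ 2 ^ p * (a ^ p + b ^ p) := by
        have h2 : (0:ℝ) ≤ 2 ^ p := Real.rpow_nonneg (by norm_num) p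
        rcases max_cases a b with ⟨he, _⟩ | ⟨he, _⟩ <;> rw [he] <;>
          nlinarith [Real.rpow_nonneg ha p, Real.rpow_nonneg hb p]

lemma one_side_aux {p : ℝ} (hp : 1 ≤ p) {a b sb : ℝ} (hb0 : 0 ≤ b) (hbsb : b ≤ sb) (hba : b ≤ a) :
    (a - b) ^ p ≤ 2 ^ p * ((if sb ≤ a then (a - sb) ^ p else 0) + (sb - b) ^ p) := by
  have hp0 : (0:ℝ) ≤ p := by linarith
  have h2 : (1:ℝ) ≤ 2 ^ p := by
    calc (1:ℝ) = 1 ^ p := (Real.one_rpow p).symm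
    _ ≤ 2 ^ p := Real.rpow_le_rpow zero_le_one one_le_two hp0
  by_cases h : sb ≤ a
  · rw [if_pos h]
    have he : a - b = (a - sb) + (sb - b) := by ring
    rw [he]
    exact two_rpow_aux hp (by linarith) (by linarith)
  · rw [if_neg h]
    push_neg at h
    have h3 : (a - b) ^ p ≤ (sb - b) ^ p := Real.rpow_le_rpow (by linarith) (by linarith) hp0
    nlinarith [Real.rpow_nonneg (sub_nonneg.mpr hbsb) p]

lemma pointwise_bound_aux {p : ℝ} (hp : 1 ≤ p) {a b sa sb : ℝ} (ha : 0 ≤ a) (hb : 0 ≤ b)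
    (hasa : a ≤ sa) (hbsb : b ≤ sb) :
    |a - b| ^ p ≤ 2 ^ p * ((if sb ≤ a then (a - sb) ^ p else 0) + (sb - b) ^ p)
      + 2 ^ p * ((if sa ≤ b then (b - sa) ^ p else 0) + (sa - a) ^ p) := by
  have h2 : (0:ℝ) ≤ 2 ^ p := Real.rpow_nonneg (by norm_num) p
  have nn1 : 0 ≤ (if sb ≤ a then (a - sb) ^ p else 0) + (sb - b) ^ p := by
    have := Real.rpow_nonneg (sub_nonneg.mpr hbsb) p
    rcases le_or_gt sb a with h | h
    · rw [if_pos h]; nlinarith [Real.rpow_nonneg (sub_nonneg.mpr h) p]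
    · rw [if_neg (not_le.mpr h)]; linarith
  have nn2 : 0 ≤ (if sa ≤ b then (b - sa) ^ p else 0) + (sa - a) ^ p := by
    have := Real.rpow_nonneg (sub_nonneg.mpr hasa) p
    rcases le_or_gt sa b with h | h
    · rw [if_pos h]; nlinarith [Real.rpow_nonneg (sub_nonneg.mpr h) p]
    · rw [if_neg (not_le.mpr h)]; linarith
  rcases le_total b a with h | h
  · rw [abs_of_nonneg (sub_nonneg.mpr h)]
    have := one_side_aux hp hb hbsb h
    nlinarith
  · rw [abs_of_nonpos (sub_nonpos.mpr h), neg_sub]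
    have := one_side_aux hp ha hasa h
    nlinarith

/-- Theorem 1.2 (Tightness), moment bound: for fixed `p ≥ 1`,
`sup_{x ≠ y} E[|t(x) - t(y)|^p] / |x - y|^p < ∞`. -/
theorem stmt_2
    {Ω : Type*} [MeasurableSpace Ω] (P : Measure Ω) [IsProbabilityMeasure P]
    (d : ℕ) (hd : 1 ≤ d) (p : ℝ) (hp : 1 ≤ p)
    (t σ : (Fin d → ℤ) → Ω → ℝ)
    (ht_meas : ∀ x, Measurable (t x)) (hσ_meas : ∀ x, Measurable (σ x))
    (ht_nonneg : ∀ x ω, 0 ≤ t x ω) (hσ_nonneg : ∀ x ω, 0 ≤ σ x ω)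
    -- finite p-th moments
    (ht_int : ∀ x, Integrable (fun ω => t x ω ^ p) P)
    (hσ_int : ∀ x, Integrable (fun ω => σ x ω ^ p) P)
    -- (i) the renewal bound of Lemma 3.1
    (hrenewal : ∀ x y, ∫ ω in {ω | σ y ω ≤ t x ω}, (t x ω - σ y ω) ^ p ∂P
      ≤ (P {ω | σ y ω ≤ t x ω}).toReal * ∫ ω, t (x - y) ω ^ p ∂P)
    -- (ii) t ≤ σ a.s. and uniform bound on E[(σ - t)^p]
    (htσ : ∀ y, ∀ᵐ ω ∂P, t y ω ≤ σ y ω)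
    (K : ℝ) (hK : ∀ y, ∫ ω, (σ y ω - t y ω) ^ p ∂P ≤ K)
    -- (iii) sup_{x ≠ 0} E[t(x)^p] / |x|^p < ∞ (shape theorem, Lemma 3.2)
    (M : ℝ) (hM : ∀ x : Fin d → ℤ, x ≠ 0 →
      (∫ ω, t x ω ^ p ∂P) / (onorm x : ℝ) ^ p ≤ M) :
    ∃ B : ℝ, ∀ x y : Fin d → ℤ, x ≠ y →
      (∫ ω, |t x ω - t y ω| ^ p ∂P) / (onorm (x - y) : ℝ) ^ p ≤ B := by
  have hp0 : (0:ℝ) ≤ p := by linarith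
  have h2p : (0:ℝ) ≤ 2 ^ p := Real.rpow_nonneg (by norm_num) p
  have hmeas_rpow : ∀ f : Ω → ℝ, Measurable f → Measurable (fun ω => f ω ^ p) :=
    fun f hf => (Real.continuous_rpow_const hp0).measurable.comp hf
  -- onorm of nonzero vector is ≥ 1
  have honorm : ∀ z : Fin d → ℤ, z ≠ 0 → (1:ℝ) ≤ (onorm z : ℝ) := by
    intro z hz
    have : onorm z ≠ 0 := fun h => hz (onorm_eq_zero h)
    exact_mod_cast Nat.one_le_iff_ne_zero.mpr this
  have hK0 : 0 ≤ K := by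
    refine le_trans ?_ (hK 0)
    refine integral_nonneg_of_ae ((htσ 0).mono fun ω h => ?_)
    exact Real.rpow_nonneg (sub_nonneg.mpr h) p
  -- integrability of (σ y - t y)^p
  have int_h : ∀ b, Integrable (fun ω => (σ b ω - t b ω) ^ p) P := by
    intro b
    refine (hσ_int b).mono
      ((hmeas_rpow _ ((hσ_meas b).sub (ht_meas b))).aestronglyMeasurable) ?_
    refine (htσ b).mono fun ω h => ?_
    have h1 : 0 ≤ σ b ω - t b ω := sub_nonneg.mpr h
    have h2 : σ b ω - t b ω ≤ σ b ω := by have := ht_nonneg b ω; linarith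
    rw [Real.norm_eq_abs, Real.norm_eq_abs, abs_of_nonneg (Real.rpow_nonneg h1 p),
      abs_of_nonneg (Real.rpow_nonneg (hσ_nonneg b ω) p)]
    exact Real.rpow_le_rpow h1 h2 hp0
  -- integrability of the truncated term
  have hSmeas : ∀ a b : Fin d → ℤ, MeasurableSet {ω | σ b ω ≤ t a ω} :=
    fun a b => measurableSet_le (hσ_meas b) (ht_meas a)
  have int_g : ∀ a b : Fin d → ℤ,
      Integrable (fun ω => ({ω | σ b ω ≤ t a ω}).indicator
        (fun ω => (t a ω - σ b ω) ^ p) ω) P := by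
    intro a b
    refine (ht_int a).mono
      (((hmeas_rpow _ ((ht_meas a).sub (hσ_meas b))).indicator (hSmeas a b)).aestronglyMeasurable)
      (Eventually.of_forall fun ω => ?_)
    rw [Real.norm_eq_abs, Real.norm_eq_abs,
      abs_of_nonneg (Real.rpow_nonneg (ht_nonneg a ω) p), Set.indicator_apply]
    split
    · next hmem =>
      have h1 : 0 ≤ t a ω - σ b ω := sub_nonneg.mpr hmem
      rw [abs_of_nonneg (Real.rpow_nonneg h1 p)]
      refine Real.rpow_le_rpow h1 ?_ hp0
      have := hσ_nonneg b ω; linarith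
    · rw [abs_zero]; exact Real.rpow_nonneg (ht_nonneg a ω) p
  -- key renewal estimate
  have key : ∀ a b : Fin d → ℤ, a ≠ b →
      ∫ ω, ({ω | σ b ω ≤ t a ω}).indicator (fun ω => (t a ω - σ b ω) ^ p) ω ∂P
        ≤ M * (onorm (a - b) : ℝ) ^ p := by
    intro a b hab
    rw [integral_indicator (hSmeas a b)]
    have h1 := hrenewal a b
    have h2 : (P {ω | σ b ω ≤ t a ω}).toReal ≤ 1 := by
      calc (P _).toReal ≤ (1:ENNReal).toReal := ENNReal.toReal_mono (by simp) prob_le_one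
        _ = 1 := ENNReal.toReal_one
    have h3 : 0 ≤ ∫ ω, t (a - b) ω ^ p ∂P :=
      integral_nonneg fun ω => Real.rpow_nonneg (ht_nonneg _ _) p
    have h4 : ∫ ω, t (a - b) ω ^ p ∂P ≤ M * (onorm (a - b) : ℝ) ^ p := by
      have hne : a - b ≠ 0 := sub_ne_zero.mpr hab
      have hdiv := hM (a - b) hne
      have hpos : (0:ℝ) < (onorm (a - b) : ℝ) ^ p :=
        Real.rpow_pos_of_pos (by linarith [honorm _ hne]) p
      rw [div_le_iff₀ hpos] at hdiv
      exact hdiv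
    have h5 : (P {ω | σ b ω ≤ t a ω}).toReal * ∫ ω, t (a - b) ω ^ p ∂P
        ≤ ∫ ω, t (a - b) ω ^ p ∂P := by
      nlinarith [ENNReal.toReal_nonneg (a := P {ω | σ b ω ≤ t a ω})]
    linarith
  refine ⟨2 ^ p * 2 * (M + K), fun x y hxy => ?_⟩
  have hne : x - y ≠ 0 := sub_ne_zero.mpr hxy
  set n : ℝ := (onorm (x - y) : ℝ) with hn
  have hn1 : (1:ℝ) ≤ n := honorm _ hne
  have hnp : (0:ℝ) < n ^ p := Real.rpow_pos_of_pos (by linarith) p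
  have hnp1 : (1:ℝ) ≤ n ^ p := by
    calc (1:ℝ) = 1 ^ p := (Real.one_rpow p).symm
      _ ≤ n ^ p := Real.rpow_le_rpow zero_le_one hn1 hp0
  have honorm_symm : (onorm (y - x) : ℝ) = n := by
    rw [hn, show y - x = -(x - y) by ring, onorm_neg]
  -- integrability of the LHS
  have int_f : Integrable (fun ω => |t x ω - t y ω| ^ p) P := by
    have hint : Integrable (fun ω => 2 ^ p * (t x ω ^ p + t y ω ^ p)) P :=
      ((ht_int x).add (ht_int y)).const_mul _
    refine hint.mono'
      ((hmeas_rpow _ ((ht_meas x).sub (ht_meas y)).abs).aestronglyMeasurable)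
      (Eventually.of_forall fun ω => ?_)
    rw [Real.norm_eq_abs, abs_of_nonneg (Real.rpow_nonneg (abs_nonneg _) p)]
    have h1 : |t x ω - t y ω| ≤ t x ω + t y ω := by
      have := ht_nonneg x ω; have := ht_nonneg y ω
      rw [abs_sub_le_iff]; constructor <;> linarith
    calc |t x ω - t y ω| ^ p ≤ (t x ω + t y ω) ^ p :=
          Real.rpow_le_rpow (abs_nonneg _) h1 hp0
      _ ≤ 2 ^ p * (t x ω ^ p + t y ω ^ p) :=
          two_rpow_aux hp (ht_nonneg x ω) (ht_nonneg y ω)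
  -- pointwise bound, a.e.
  set g1 : Ω → ℝ := fun ω => ({ω | σ y ω ≤ t x ω}).indicator (fun ω => (t x ω - σ y ω) ^ p) ω
  set g2 : Ω → ℝ := fun ω => ({ω | σ x ω ≤ t y ω}).indicator (fun ω => (t y ω - σ x ω) ^ p) ω
  set h1 : Ω → ℝ := fun ω => (σ y ω - t y ω) ^ p
  set h2 : Ω → ℝ := fun ω => (σ x ω - t x ω) ^ p
  have int_rhs : Integrable (fun ω => 2 ^ p * (g1 ω + h1 ω) + 2 ^ p * (g2 ω + h2 ω)) P :=
    (((int_g x y).add (int_h y)).const_mul _).add (((int_g y x).add (int_h x)).const_mul _)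
  have hmono : ∫ ω, |t x ω - t y ω| ^ p ∂P
      ≤ ∫ ω, (2 ^ p * (g1 ω + h1 ω) + 2 ^ p * (g2 ω + h2 ω)) ∂P := by
    refine integral_mono_ae int_f int_rhs ?_
    filter_upwards [htσ x, htσ y] with ω hx hy
    have := pointwise_bound_aux hp (ht_nonneg x ω) (ht_nonneg y ω) hx hy
    simpa [g1, g2, h1, h2, Set.indicator_apply, Set.mem_setOf_eq] using this
  have hsplit : ∫ ω, (2 ^ p * (g1 ω + h1 ω) + 2 ^ p * (g2 ω + h2 ω)) ∂P
      = 2 ^ p * ((∫ ω, g1 ω ∂P) + ∫ ω, h1 ω ∂P)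
        + 2 ^ p * ((∫ ω, g2 ω ∂P) + ∫ ω, h2 ω ∂P) := by
    have A1 : Integrable (fun ω => g1 ω + h1 ω) P := (int_g x y).add (int_h y)
    have A2 : Integrable (fun ω => g2 ω + h2 ω) P := (int_g y x).add (int_h x)
    have B1 : Integrable (fun ω => 2 ^ p * (g1 ω + h1 ω)) P := A1.const_mul _
    have B2 : Integrable (fun ω => 2 ^ p * (g2 ω + h2 ω)) P := A2.const_mul _
    rw [integral_add B1 B2, integral_const_mul, integral_const_mul,
      integral_add (int_g x y) (int_h y), integral_add (int_g y x) (int_h x)]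
  have hg1 : ∫ ω, g1 ω ∂P ≤ M * n ^ p := key x y hxy
  have hg2 : ∫ ω, g2 ω ∂P ≤ M * n ^ p := by
    have := key y x (fun h => hxy h.symm)
    rwa [honorm_symm] at this
  have hh1 : ∫ ω, h1 ω ∂P ≤ K := hK y
  have hh2 : ∫ ω, h2 ω ∂P ≤ K := hK x
  have hKn : K ≤ K * n ^ p := le_mul_of_one_le_right hK0 hnp1
  rw [div_le_iff₀ hnp]
  have : ∫ ω, |t x ω - t y ω| ^ p ∂P ≤ 2 ^ p * (M * n ^ p + K) + 2 ^ p * (M * n ^ p + K) := by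
    rw [hsplit] at hmono
    nlinarith
  nlinarith [mul_le_mul_of_nonneg_left hKn h2p]
end

section
/- Let (Ω, F, P) be a probability space satisfying the hypotheses below. Then for every x ∈ ℤ^d, μ(x) ≤ C₁ + E[t(x)] · liminf_{n → ∞} (1/n) · Σ_{k=1}^{n} P( t((k−1)x) ≤ t(kx) ). (This is the key intermediate inequality in the proof of the first statement of Theorem 1.1, obtained by telescoping E[t(nx)] over the index set I_{n,x} of correctly ordered expected hitting times and applying Lemma 3.1 and Proposition 1.3.) -/
open MeasureTheory Filter Finset

open Topology

/-!
Write `E t(kx) - E t((k-1)x) = E[t(kx) - σ((k-1)x)] + E[σ((k-1)x) - t((k-1)x)]`. The second term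
is at most `C₁`; by the renewal bound the first is at most `P(σ((k-1)x) ≤ t(kx)) · E t(x)`, and
since `t ≤ σ` this probability is at most `P(t((k-1)x) ≤ t(kx))`. Telescoping over `k ≤ n`,
dividing by `n` and comparing along a subsequence realising the liminf of the Cesàro averages
gives the bound on `μ(x) = lim E t(nx) / n`.
-/

section Renewal

variable {Ω : Type*} [MeasurableSpace Ω] {P : Measure Ω} {X S T : Ω → ℝ}

theorem integral_sub_le_setIntegral_sub (hX : Integrable X P) (hS : Integrable S P) :
    ∫ ω, (X ω - S ω) ∂P ≤ ∫ ω in {ω | S ω ≤ X ω}, (X ω - S ω) ∂P := by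
  have hA : NullMeasurableSet {ω | S ω ≤ X ω} P :=
    nullMeasurableSet_le hS.aemeasurable hX.aemeasurable
  have hcompl : ∫ ω in {ω | S ω ≤ X ω}ᶜ, (X ω - S ω) ∂P ≤ 0 := by
    refine integral_nonpos_of_ae ?_
    filter_upwards [ae_restrict_mem₀ hA.compl] with ω hω
    exact sub_nonpos.mpr (not_le.mp (Set.notMem_ofPred_iff.mp hω)).le
  have hsplit := integral_add_compl₀ hA (hX.sub hS)
  simp only [Pi.sub_apply] at hsplit
  linarith

theorem integral_sub_integral_le_of_renewal [IsFiniteMeasure P]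
    (hX : Integrable X P) (hS : Integrable S P) (hT : Integrable T P) (hTS : T ≤ᵐ[P] S)
    {c C : ℝ} (hc : 0 ≤ c)
    (hrenewal : ∫ ω in {ω | S ω ≤ X ω}, (X ω - S ω) ∂P ≤ (P {ω | S ω ≤ X ω}).toReal * c)
    (hC : ∫ ω, (S ω - T ω) ∂P ≤ C) :
    ∫ ω, X ω ∂P - ∫ ω, T ω ∂P ≤ C + c * (P {ω | T ω ≤ X ω}).toReal := by
  have hprob : (P {ω | S ω ≤ X ω}).toReal ≤ (P {ω | T ω ≤ X ω}).toReal := by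
    refine ENNReal.toReal_mono (measure_ne_top P _) (measure_mono_ae ?_)
    filter_upwards [hTS] with ω hω hSX
    exact hω.trans hSX
  have hsplit : ∫ ω, X ω ∂P - ∫ ω, T ω ∂P = ∫ ω, (X ω - S ω) ∂P + ∫ ω, (S ω - T ω) ∂P := by
    rw [integral_sub hX hS, integral_sub hS hT]
    ring
  calc ∫ ω, X ω ∂P - ∫ ω, T ω ∂P
      ≤ (P {ω | S ω ≤ X ω}).toReal * c + C := by
        linarith [integral_sub_le_setIntegral_sub hX hS]
    _ ≤ C + c * (P {ω | T ω ≤ X ω}).toReal := by nlinarith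

end Renewal

theorem le_add_sum_Icc_of_sub_le {a b : ℕ → ℝ} (h : ∀ k, 1 ≤ k → a k - a (k - 1) ≤ b k)
    (n : ℕ) : a n ≤ a 0 + ∑ k ∈ Icc 1 n, b k := by
  induction n with
  | zero => simp
  | succ n ih =>
    rw [sum_Icc_succ_top (by omega)]
    have hstep := h (n + 1) (by omega)
    rw [Nat.add_sub_cancel] at hstep
    linarith

theorem div_le_add_mul_average_of_sub_le {a p : ℕ → ℝ} {C E : ℝ}
    (h : ∀ k, 1 ≤ k → a k - a (k - 1) ≤ C + E * p k) {n : ℕ} (hn : 1 ≤ n) :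
    a n / n ≤ a 0 / n + C + E * (1 / (n : ℝ) * ∑ k ∈ Icc 1 n, p k) := by
  have hn0 : (0 : ℝ) < n := by exact_mod_cast hn
  have htele := le_add_sum_Icc_of_sub_le h n
  rw [sum_add_distrib, sum_const, Nat.card_Icc, Nat.add_sub_cancel, nsmul_eq_mul, ← mul_sum]
    at htele
  rw [div_le_iff₀ hn0]
  field_simp
  linarith

theorem one_div_mul_sum_Icc_le_one {p : ℕ → ℝ} (hp : ∀ k, p k ≤ 1) (n : ℕ) :
    1 / (n : ℝ) * ∑ k ∈ Icc 1 n, p k ≤ 1 := by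
  rcases Nat.eq_zero_or_pos n with rfl | hn
  · simp
  have hsum : ∑ k ∈ Icc 1 n, p k ≤ n := by
    simpa using sum_le_card_nsmul (Icc 1 n) p 1 fun k _ => hp k
  rw [one_div, inv_mul_le_iff₀ (by exact_mod_cast hn)]
  simpa using hsum

theorem le_add_mul_liminf_of_eventually_le {ι : Type*} {l : Filter ι} [l.NeBot] {u v s : ι → ℝ}
    {μ ν E : ℝ} (hu : Tendsto u l (𝓝 μ)) (hv : Tendsto v l (𝓝 ν)) (hE : 0 ≤ E)
    (hs : IsBoundedUnder (· ≤ ·) l s) (h : ∀ᶠ i in l, u i ≤ v i + E * s i) :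
    μ ≤ ν + E * liminf s l := by
  refine le_of_forall_pos_le_add fun ε hε => ?_
  set δ := ε / (2 + E) with hδ_def
  have hδ : 0 < δ := by positivity
  have hfreq : ∃ᶠ i in l, s i < liminf s l + δ :=
    frequently_lt_of_liminf_lt hs.isCoboundedUnder_ge (lt_add_of_pos_right _ hδ)
  obtain ⟨i, hsi, hui, hvi, hi⟩ := (hfreq.and_eventually
    ((hu.eventually (eventually_gt_nhds (sub_lt_self μ hδ))).and
      ((hv.eventually (eventually_lt_nhds (lt_add_of_pos_right ν hδ))).and h))).exists
  have hEs : E * s i ≤ E * (liminf s l + δ) := mul_le_mul_of_nonneg_left hsi.le hE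
  have hε : ε = (2 + E) * δ := by rw [hδ_def]; field_simp
  linarith

theorem stmt_8_general
    {Ω : Type*} [MeasurableSpace Ω] (P : Measure Ω) [IsProbabilityMeasure P]
    (d : ℕ)
    (t σ : (Fin d → ℤ) → Ω → ℝ)
    (ht_nonneg : ∀ x ω, 0 ≤ t x ω)
    (ht_int : ∀ x, Integrable (t x) P) (hσ_int : ∀ x, Integrable (σ x) P)
    -- (i) the renewal bound of Lemma 3.1
    (hrenewal : ∀ x y, ∫ ω in {ω | σ y ω ≤ t x ω}, (t x ω - σ y ω) ∂P
      ≤ (P {ω | σ y ω ≤ t x ω}).toReal * ∫ ω, t (x - y) ω ∂P)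
    -- (ii) t ≤ σ a.s. and uniform bound on E[σ - t]
    (htσ : ∀ y, ∀ᵐ ω ∂P, t y ω ≤ σ y ω)
    (C₁ : ℝ) (hC₁ : ∀ y, ∫ ω, (σ y ω - t y ω) ∂P ≤ C₁)
    -- (iii) normalized expected hitting times converge
    (μ : (Fin d → ℤ) → ℝ)
    (hμ : ∀ x, Tendsto (fun n : ℕ => (∫ ω, t (n • x) ω ∂P) / n) atTop (nhds (μ x)))
    :
    ∀ x : Fin d → ℤ, μ x ≤ C₁ + (∫ ω, t x ω ∂P) * liminf (fun n : ℕ =>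
        (1 / (n : ℝ)) * ∑ k ∈ Finset.Icc 1 n,
          (P {ω | t ((k - 1) • x) ω ≤ t (k • x) ω}).toReal) atTop := by
  intro x
  have hE : 0 ≤ ∫ ω, t x ω ∂P := integral_nonneg (ht_nonneg x)
  have hstep : ∀ k : ℕ, 1 ≤ k → ∫ ω, t (k • x) ω ∂P - ∫ ω, t ((k - 1) • x) ω ∂P
      ≤ C₁ + (∫ ω, t x ω ∂P) * (P {ω | t ((k - 1) • x) ω ≤ t (k • x) ω}).toReal := by
    intro k hk
    have hshift : k • x - (k - 1) • x = x := by
      obtain ⟨m, rfl⟩ := Nat.exists_eq_add_of_le' hk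
      rw [Nat.add_sub_cancel, succ_nsmul, add_sub_cancel_left]
    refine integral_sub_integral_le_of_renewal (ht_int _) (hσ_int _) (ht_int _) (htσ _) hE ?_
      (hC₁ _)
    simpa only [hshift] using hrenewal (k • x) ((k - 1) • x)
  refine le_add_mul_liminf_of_eventually_le (hμ x)
    (by simpa only [zero_add] using
      (tendsto_const_div_atTop_nhds_zero_nat (∫ ω, t ((0 : ℕ) • x) ω ∂P)).add_const C₁) hE
    (isBoundedUnder_of ⟨1, one_div_mul_sum_Icc_le_one fun k => measureReal_le_one⟩) ?_
  filter_upwards [eventually_ge_atTop 1] with n hn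
  exact div_le_add_mul_average_of_sub_le hstep hn

/-- First statement of Theorem 1.1 (Uniformity of hitting times):
`lim_{|x|→∞} liminf_{n→∞} (1/n) ∑_{k=1}^n P(t((k-1)x) ≤ t(kx)) = 1`,
the limit in `x` being along the cofinite filter on `ℤ^d`. -/
theorem stmt_8
    {Ω : Type*} [MeasurableSpace Ω] (P : Measure Ω) [IsProbabilityMeasure P]
    (d : ℕ) (hd : 1 ≤ d)
    (t σ : (Fin d → ℤ) → Ω → ℝ)
    (ht_meas : ∀ x, Measurable (t x)) (hσ_meas : ∀ x, Measurable (σ x))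
    (ht_nonneg : ∀ x ω, 0 ≤ t x ω) (hσ_nonneg : ∀ x ω, 0 ≤ σ x ω)
    (ht_int : ∀ x, Integrable (t x) P) (hσ_int : ∀ x, Integrable (σ x) P)
    -- (i) the renewal bound of Lemma 3.1
    (hrenewal : ∀ x y, ∫ ω in {ω | σ y ω ≤ t x ω}, (t x ω - σ y ω) ∂P
      ≤ (P {ω | σ y ω ≤ t x ω}).toReal * ∫ ω, t (x - y) ω ∂P)
    -- (ii) t ≤ σ a.s. and uniform bound on E[σ - t]
    (htσ : ∀ y, ∀ᵐ ω ∂P, t y ω ≤ σ y ω)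
    (C₁ : ℝ) (hC₁ : ∀ y, ∫ ω, (σ y ω - t y ω) ∂P ≤ C₁)
    -- (iii) normalized expected hitting times converge
    (μ : (Fin d → ℤ) → ℝ) (hμ_nonneg : ∀ x, 0 ≤ μ x)
    (hμ : ∀ x, Tendsto (fun n : ℕ => (∫ ω, t (n • x) ω ∂P) / n) atTop (nhds (μ x)))
    :
    ∀ x : Fin d → ℤ, μ x ≤ C₁ + (∫ ω, t x ω ∂P) * liminf (fun n : ℕ =>
        (1 / (n : ℝ)) * ∑ k ∈ Finset.Icc 1 n,
          (P {ω | t ((k - 1) • x) ω ≤ t (k • x) ω}).toReal) atTop :=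
  stmt_8_general P d t σ ht_nonneg ht_int hσ_int hrenewal htσ C₁ hC₁ μ hμ
end

section
/- Let (Ω, F, P) be a probability space satisfying the hypotheses below. Then for every x ∈ ℤ^d, μ(x) ≤ (C₁ + E[t(x)]) · liminf_{n → ∞} (1/n) · #{ k ∈ {1, …, n} : E[t((k−1)x)] ≤ E[t(kx)] }. (This is the key intermediate inequality in the proof of the second statement of Theorem 1.1, obtained by telescoping E[t(nx)] over the index set I_{n,x} of correctly ordered expected hitting times and applying Lemma 3.1 and Proposition 1.3.) -/
/-!
On the event `{σ(kx) ≤ t((k+1)x)}` the renewal bound restarts the process at the essential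
hitting time `σ(kx)`, so `E t((k+1)x) ≤ E σ(kx) + E t(x) ≤ E t(kx) + C₁ + E t(x)`. Hence every
increment of `k ↦ E t(kx)` is at most `C₁ + E t(x)`, and telescoping over the indices where the
sequence does not decrease bounds `E t(nx)` by `E t(0) + (C₁ + E t(x)) · #I_{n,x}`. Dividing by
`n` and passing to the liminf gives the inequality.
-/

open MeasureTheory Filter Finset

theorem le_add_mul_card_filter_of_le_add {a : ℕ → ℝ} {c : ℝ} (h : ∀ k, a (k + 1) ≤ a k + c)
    (n : ℕ) : a n ≤ a 0 + c * #{k ∈ Icc 1 n | a (k - 1) ≤ a k} := by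
  induction n with
  | zero => simp
  | succ n ih =>
    rw [card_filter, sum_Icc_succ_top (by omega), ← card_filter, Nat.add_sub_cancel]
    split_ifs with hle
    · push_cast
      linarith [h n]
    · push_cast
      linarith [not_le.mp hle]

theorem le_mul_liminf_of_le_add_mul {a : ℕ → ℝ} {S : ℕ → ℕ} {c m : ℝ} (hc : 0 ≤ c)
    (hS : ∀ n, S n ≤ n) (ha : ∀ n, a n ≤ a 0 + c * S n)
    (hlim : Tendsto (fun n : ℕ => a n / n) atTop (nhds m)) :
    m ≤ c * liminf (fun n : ℕ => (1 / (n : ℝ)) * S n) atTop := by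
  set f : ℕ → ℝ := fun n => (1 / (n : ℝ)) * S n
  have hf_nonneg : ∀ n, 0 ≤ f n := fun n => by positivity
  have hf_le_one : ∀ n, f n ≤ 1 := fun n => by
    rcases Nat.eq_zero_or_pos n with rfl | hn
    · simp [f]
    · rw [show f n = S n / n from one_div_mul_eq_div _ _, div_le_one (by positivity)]
      exact_mod_cast hS n
  have hlim' : Tendsto (fun n : ℕ => a n / n - a 0 / n) atTop (nhds m) := by
    simpa using hlim.sub (tendsto_const_div_atTop_nhds_zero_nat (a 0))
  have hbound : ∀ n : ℕ, a n / n - a 0 / n ≤ c * f n := fun n => by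
    rw [← sub_div, show c * f n = c * S n / n by simp only [f]; ring]
    gcongr
    linarith [ha n]
  calc m = liminf (fun n : ℕ => a n / n - a 0 / n) atTop := hlim'.liminf_eq.symm
    _ ≤ liminf (fun n => c * f n) atTop :=
      liminf_le_liminf (.of_forall hbound) hlim'.isBoundedUnder_ge
        (isCoboundedUnder_ge_of_le atTop fun n => mul_le_of_le_one_right hc (hf_le_one n))
    _ = c * liminf f atTop :=
      ((monotone_mul_left_of_nonneg hc).map_liminf_of_continuousAt f
        (continuous_const_mul c).continuousAt (isCoboundedUnder_ge_of_le atTop hf_le_one)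
        (isBoundedUnder_of ⟨0, hf_nonneg⟩)).symm

section Renewal

variable {Ω : Type*} [MeasurableSpace Ω] {P : Measure Ω}

theorem integral_le_integral_add_setIntegral_sub_s9 {T S : Ω → ℝ} (hT : Integrable T P)
    (hS : Integrable S P) :
    ∫ ω, T ω ∂P ≤ ∫ ω, S ω ∂P + ∫ ω in {ω | S ω ≤ T ω}, (T ω - S ω) ∂P := by
  have hs : NullMeasurableSet {ω | S ω ≤ T ω} P :=
    nullMeasurableSet_le hS.aemeasurable hT.aemeasurable
  have hexcess : Integrable ({ω | S ω ≤ T ω}.indicator fun ω => T ω - S ω) P :=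
    (hT.sub hS).indicator₀ hs
  have hpt : ∀ ω, T ω ≤ S ω + {ω | S ω ≤ T ω}.indicator (fun ω => T ω - S ω) ω := fun ω => by
    by_cases h : S ω ≤ T ω <;> simp [h, le_of_not_ge]
  calc ∫ ω, T ω ∂P ≤ ∫ ω, S ω + {ω | S ω ≤ T ω}.indicator (fun ω => T ω - S ω) ω ∂P :=
        integral_mono hT (hS.add hexcess) hpt
    _ = _ := by rw [integral_add hS hexcess, integral_indicator₀ hs]

theorem integral_le_add_integral_sub_of_renewal [IsProbabilityMeasure P] {G : Type*} [AddGroup G]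
    {t σ : G → Ω → ℝ} {C : ℝ} {y z : G} (hty : Integrable (t y) P) (htz : Integrable (t z) P)
    (hσy : Integrable (σ y) P) (ht_nonneg : 0 ≤ ∫ ω, t (z - y) ω ∂P)
    (hrenewal : ∫ ω in {ω | σ y ω ≤ t z ω}, (t z ω - σ y ω) ∂P
      ≤ (P {ω | σ y ω ≤ t z ω}).toReal * ∫ ω, t (z - y) ω ∂P)
    (hC : ∫ ω, (σ y ω - t y ω) ∂P ≤ C) :
    ∫ ω, t z ω ∂P ≤ ∫ ω, t y ω ∂P + C + ∫ ω, t (z - y) ω ∂P := by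
  rw [integral_sub hσy hty] at hC
  calc ∫ ω, t z ω ∂P
      ≤ ∫ ω, σ y ω ∂P + ∫ ω in {ω | σ y ω ≤ t z ω}, (t z ω - σ y ω) ∂P :=
        integral_le_integral_add_setIntegral_sub_s9 htz hσy
    _ ≤ ∫ ω, σ y ω ∂P + ∫ ω, t (z - y) ω ∂P := by
        gcongr
        exact hrenewal.trans (mul_le_of_le_one_left ht_nonneg measureReal_le_one)
    _ ≤ ∫ ω, t y ω ∂P + C + ∫ ω, t (z - y) ω ∂P := by linarith

end Renewal

theorem stmt_9_general
    {Ω : Type*} [MeasurableSpace Ω] (P : Measure Ω) [IsProbabilityMeasure P]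
    (d : ℕ)
    (t σ : (Fin d → ℤ) → Ω → ℝ)
    (ht_nonneg : ∀ x ω, 0 ≤ t x ω)
    (ht_int : ∀ x, Integrable (t x) P) (hσ_int : ∀ x, Integrable (σ x) P)
    -- (i) the renewal bound of Lemma 3.1
    (hrenewal : ∀ x y, ∫ ω in {ω | σ y ω ≤ t x ω}, (t x ω - σ y ω) ∂P
      ≤ (P {ω | σ y ω ≤ t x ω}).toReal * ∫ ω, t (x - y) ω ∂P)
    -- (ii) t ≤ σ a.s. and uniform bound on E[σ - t]
    (htσ : ∀ y, ∀ᵐ ω ∂P, t y ω ≤ σ y ω)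
    (C₁ : ℝ) (hC₁ : ∀ y, ∫ ω, (σ y ω - t y ω) ∂P ≤ C₁)
    -- (iii) normalized expected hitting times converge
    (μ : (Fin d → ℤ) → ℝ)
    (hμ : ∀ x, Tendsto (fun n : ℕ => (∫ ω, t (n • x) ω ∂P) / n) atTop (nhds (μ x)))
    :
    ∀ x : Fin d → ℤ, μ x ≤ (C₁ + ∫ ω, t x ω ∂P) * liminf (fun n : ℕ =>
        (1 / (n : ℝ)) * ((Finset.Icc 1 n).filter (fun k =>
          ∫ ω, t ((k - 1) • x) ω ∂P ≤ ∫ ω, t (k • x) ω ∂P)).card) atTop := by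
  intro x
  set A : ℕ → ℝ := fun k => ∫ ω, t (k • x) ω ∂P
  have hC₁_nonneg : 0 ≤ C₁ :=
    (integral_nonneg_of_ae ((htσ 0).mono fun ω h => sub_nonneg.2 h)).trans (hC₁ 0)
  have htx_nonneg : 0 ≤ ∫ ω, t x ω ∂P := integral_nonneg (ht_nonneg x)
  have hstep : ∀ k, A (k + 1) ≤ A k + (C₁ + ∫ ω, t x ω ∂P) := fun k => by
    have h := integral_le_add_integral_sub_of_renewal (ht_int _) (ht_int _) (hσ_int _)
      (integral_nonneg (ht_nonneg _)) (hrenewal ((k + 1) • x) (k • x)) (hC₁ (k • x))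
    rw [succ_nsmul, add_sub_cancel_left] at h
    simp only [A, succ_nsmul]
    linarith
  have hcard : ∀ n, #{k ∈ Icc 1 n | A (k - 1) ≤ A k} ≤ n :=
    fun n => (card_filter_le _ _).trans (by simp)
  exact le_mul_liminf_of_le_add_mul (a := A) (by positivity) hcard
    (le_add_mul_card_filter_of_le_add hstep) (hμ x)

/-- First statement of Theorem 1.1 (Uniformity of hitting times):
`lim_{|x|→∞} liminf_{n→∞} (1/n) ∑_{k=1}^n P(t((k-1)x) ≤ t(kx)) = 1`,
the limit in `x` being along the cofinite filter on `ℤ^d`. -/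
theorem stmt_9
    {Ω : Type*} [MeasurableSpace Ω] (P : Measure Ω) [IsProbabilityMeasure P]
    (d : ℕ) (hd : 1 ≤ d)
    (t σ : (Fin d → ℤ) → Ω → ℝ)
    (ht_meas : ∀ x, Measurable (t x)) (hσ_meas : ∀ x, Measurable (σ x))
    (ht_nonneg : ∀ x ω, 0 ≤ t x ω) (hσ_nonneg : ∀ x ω, 0 ≤ σ x ω)
    (ht_int : ∀ x, Integrable (t x) P) (hσ_int : ∀ x, Integrable (σ x) P)
    -- (i) the renewal bound of Lemma 3.1
    (hrenewal : ∀ x y, ∫ ω in {ω | σ y ω ≤ t x ω}, (t x ω - σ y ω) ∂P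
      ≤ (P {ω | σ y ω ≤ t x ω}).toReal * ∫ ω, t (x - y) ω ∂P)
    -- (ii) t ≤ σ a.s. and uniform bound on E[σ - t]
    (htσ : ∀ y, ∀ᵐ ω ∂P, t y ω ≤ σ y ω)
    (C₁ : ℝ) (hC₁ : ∀ y, ∫ ω, (σ y ω - t y ω) ∂P ≤ C₁)
    -- (iii) normalized expected hitting times converge
    (μ : (Fin d → ℤ) → ℝ) (hμ_nonneg : ∀ x, 0 ≤ μ x)
    (hμ : ∀ x, Tendsto (fun n : ℕ => (∫ ω, t (n • x) ω ∂P) / n) atTop (nhds (μ x)))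
    :
    ∀ x : Fin d → ℤ, μ x ≤ (C₁ + ∫ ω, t x ω ∂P) * liminf (fun n : ℕ =>
        (1 / (n : ℝ)) * ((Finset.Icc 1 n).filter (fun k =>
          ∫ ω, t ((k - 1) • x) ω ∂P ≤ ∫ ω, t (k • x) ω ∂P)).card) atTop :=
  stmt_9_general P d t σ ht_nonneg ht_int hσ_int hrenewal htσ C₁ hC₁ μ hμ
end

section
/- Let (Ω, F, P) be a probability space satisfying the hypotheses below. Then for every ε > 0 there exists x ∈ ℤ^d such that P( t(nx) ≤ t((n+1)x) ) > 1 − ε for infinitely many integers n ≥ 0. (This is the assertion from the paper's abstract: for each ε > 0 there exists x such that, for infinitely many n, t(nx) < t((n+1)x) with probability larger than 1 − ε; it is stated with all properties of the contact process hitting times that the proof uses carried as explicit hypotheses.) -/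
open MeasureTheory Filter Finset

/-- First statement of Theorem 1.1 (Uniformity of hitting times):
`lim_{|x|→∞} liminf_{n→∞} (1/n) ∑_{k=1}^n P(t((k-1)x) ≤ t(kx)) = 1`,
the limit in `x` being along the cofinite filter on `ℤ^d`. -/
theorem stmt_11
    {Ω : Type*} [MeasurableSpace Ω] (P : Measure Ω) [IsProbabilityMeasure P]
    (d : ℕ) (hd : 1 ≤ d)
    (t σ : (Fin d → ℤ) → Ω → ℝ)
    (ht_meas : ∀ x, Measurable (t x)) (hσ_meas : ∀ x, Measurable (σ x))
    (ht_nonneg : ∀ x ω, 0 ≤ t x ω) (hσ_nonneg : ∀ x ω, 0 ≤ σ x ω)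
    (ht_int : ∀ x, Integrable (t x) P) (hσ_int : ∀ x, Integrable (σ x) P)
    -- (i) the renewal bound of Lemma 3.1
    (hrenewal : ∀ x y, ∫ ω in {ω | σ y ω ≤ t x ω}, (t x ω - σ y ω) ∂P
      ≤ (P {ω | σ y ω ≤ t x ω}).toReal * ∫ ω, t (x - y) ω ∂P)
    -- (ii) t ≤ σ a.s. and uniform bound on E[σ - t]
    (htσ : ∀ y, ∀ᵐ ω ∂P, t y ω ≤ σ y ω)
    (C₁ : ℝ) (hC₁ : ∀ y, ∫ ω, (σ y ω - t y ω) ∂P ≤ C₁)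
    -- (iii) normalized expected hitting times converge
    (μ : (Fin d → ℤ) → ℝ) (hμ_nonneg : ∀ x, 0 ≤ μ x)
    (hμ : ∀ x, Tendsto (fun n : ℕ => (∫ ω, t (n • x) ω ∂P) / n) atTop (nhds (μ x)))
    -- (iv) the shape theorem (Lemma 3.2)
    (hμ_inf : Tendsto μ cofinite atTop)
    (hshape : Tendsto (fun x => (∫ ω, t x ω ∂P) / μ x) cofinite (nhds 1)) :
    ∀ ε : ℝ, 0 < ε → ∃ x : Fin d → ℤ,
      {n : ℕ | 1 - ε < (P {ω | t (n • x) ω ≤ t ((n + 1) • x) ω}).toReal}.Infinite := by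
  intro ε hε
  -- reduce to ε ≤ 1
  set ε' : ℝ := min ε 1 with hε'def
  have hε'pos : 0 < ε' := lt_min hε one_pos
  have hε'le : ε' ≤ 1 := min_le_right _ _
  suffices h : ∃ x : Fin d → ℤ,
      {n : ℕ | 1 - ε' < (P {ω | t (n • x) ω ≤ t ((n + 1) • x) ω}).toReal}.Infinite by
    obtain ⟨x, hx⟩ := h
    refine ⟨x, hx.mono ?_⟩
    intro n hn
    have : (1:ℝ) - ε ≤ 1 - ε' := by
      have : ε' ≤ ε := min_le_left _ _
      linarith
    exact lt_of_le_of_lt this hn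
  -- choose x via the shape theorem
  haveI : Nonempty (Fin d) := ⟨⟨0, hd⟩⟩
  haveI : Infinite (Fin d → ℤ) := inferInstance
  have hC₁0 : 0 ≤ C₁ := by
    refine le_trans ?_ (hC₁ 0)
    apply integral_nonneg_of_ae
    filter_upwards [htσ 0] with ω hω
    simpa using sub_nonneg.2 hω
  have E1 : ∀ᶠ x in (cofinite : Filter (Fin d → ℤ)), (2*C₁ + ε')/ε' ≤ μ x :=
    hμ_inf.eventually_ge_atTop _
  have E2 : ∀ᶠ x in (cofinite : Filter (Fin d → ℤ)),
      (∫ ω, t x ω ∂P) / μ x ≤ 1 + ε'/2 :=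
    hshape.eventually (eventually_le_nhds (by linarith))
  have E3 : ∀ᶠ x in (cofinite : Filter (Fin d → ℤ)), 0 < μ x :=
    hμ_inf.eventually_gt_atTop 0
  obtain ⟨x, h1, h2, h3⟩ := (E1.and (E2.and E3)).exists
  have hEx : (0:ℝ) ≤ ∫ ω, t x ω ∂P := integral_nonneg (ht_nonneg x)
  have hx : C₁ + (1 - ε') * ∫ ω, t x ω ∂P < μ x := by
    have hI : ∫ ω, t x ω ∂P ≤ (1 + ε'/2) * μ x := (div_le_iff₀ h3).mp h2
    have hμx : 2*C₁ + ε' ≤ ε' * μ x := by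
      rw [div_le_iff₀ hε'pos] at h1; linarith
    nlinarith [hμ_nonneg x]
  refine ⟨x, ?_⟩
  set Ex : ℝ := ∫ ω, t x ω ∂P with hExdef
  set T : ℕ → ℝ := fun n => ∫ ω, t (n • x) ω ∂P with hTdef
  set q : ℕ → ℝ := fun n => (P {ω | t (n • x) ω ≤ t ((n + 1) • x) ω}).toReal with hqdef
  -- step inequality
  have step : ∀ k : ℕ, T (k+1) ≤ T k + C₁ + q k * Ex := by
    intro k
    have hA : MeasurableSet {ω | σ (k • x) ω ≤ t ((k+1) • x) ω} :=
      measurableSet_le (hσ_meas _) (ht_meas _)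
    set A := {ω | σ (k • x) ω ≤ t ((k+1) • x) ω} with hAdef
    have hdiff_int : Integrable (fun ω => t ((k+1) • x) ω - σ (k • x) ω) P :=
      (ht_int _).sub (hσ_int _)
    have hind_int : Integrable (A.indicator fun ω => t ((k+1) • x) ω - σ (k • x) ω) P :=
      hdiff_int.indicator hA
    have hptw : ∀ ω, t ((k+1) • x) ω ≤
        σ (k • x) ω + A.indicator (fun ω => t ((k+1) • x) ω - σ (k • x) ω) ω := by
      intro ω
      by_cases h : ω ∈ A
      · rw [Set.indicator_of_mem h]; ring_nf; exact le_refl _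
      · rw [Set.indicator_of_notMem h]
        have : ¬ σ (k • x) ω ≤ t ((k+1) • x) ω := h
        push_neg at this
        linarith
    have h1' : T (k+1) ≤ ∫ ω, (σ (k • x) ω
        + A.indicator (fun ω => t ((k+1) • x) ω - σ (k • x) ω) ω) ∂P :=
      integral_mono (ht_int _) ((hσ_int _).add hind_int) hptw
    rw [integral_add (hσ_int _) hind_int, integral_indicator hA] at h1'
    have h2' : ∫ ω in A, (t ((k+1) • x) ω - σ (k • x) ω) ∂P ≤ (P A).toReal * Ex := by
      have hr := hrenewal ((k+1) • x) (k • x)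
      have hxx : (k+1) • x - k • x = x := by
        rw [succ_nsmul]; exact add_sub_cancel_left _ _
      rw [hxx] at hr
      exact hr
    have h3' : ∫ ω, σ (k • x) ω ∂P ≤ T k + C₁ := by
      have hc := hC₁ (k • x)
      rw [integral_sub (hσ_int _) (ht_int _)] at hc
      have hTk : T k = ∫ ω, t (k • x) ω ∂P := rfl
      linarith
    have h4' : (P A).toReal ≤ q k := by
      have hm : P A ≤ P {ω | t (k • x) ω ≤ t ((k+1) • x) ω} := by
        apply measure_mono_ae
        filter_upwards [htσ (k • x)] with ω hω hmem
        exact le_trans hω hmem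
      exact ENNReal.toReal_mono (measure_ne_top _ _) hm
    have hEx' : (0:ℝ) ≤ Ex := hEx
    have h5' := mul_le_mul_of_nonneg_right h4' hEx'
    linarith
  -- telescope
  have tele : ∀ n : ℕ, T n ≤ T 0 + n * C₁ + Ex * ∑ k ∈ Finset.range n, q k := by
    intro n
    induction n with
    | zero => simp
    | succ n ih =>
      have hs := step n
      rw [Finset.sum_range_succ, mul_add]
      push_cast
      have : Ex * q n = q n * Ex := mul_comm _ _
      linarith
  -- contradiction argument
  by_contra hfin
  rw [Set.not_infinite] at hfin
  obtain ⟨N, hN⟩ := hfin.bddAbove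
  have hq_le : ∀ n, N < n → q n ≤ 1 - ε' := by
    intro n hn
    by_contra h
    push_neg at h
    exact absurd (hN h) (not_le.2 hn)
  have hq1 : ∀ n, q n ≤ 1 := fun n => by
    simpa using ENNReal.toReal_mono ENNReal.one_ne_top prob_le_one
  have hq0 : ∀ n, 0 ≤ q n := fun n => ENNReal.toReal_nonneg
  have hsum : ∀ n : ℕ, ∑ k ∈ Finset.range n, q k ≤ (N+1 : ℝ) + n * (1 - ε') := by
    intro n
    have step1 : ∑ k ∈ Finset.range n, q k
        ≤ ∑ k ∈ Finset.range n, ((1-ε') + if k ≤ N then ε' else 0) := by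
      apply Finset.sum_le_sum
      intro k _
      by_cases hkN : k ≤ N
      · simp only [hkN, if_true]; linarith [hq1 k]
      · simp only [hkN, if_false]; exact le_trans (hq_le k (not_le.mp hkN)) (by linarith)
    have step2 : ∑ k ∈ Finset.range n, ((1-ε') + if k ≤ N then ε' else 0)
        = n * (1-ε') + ∑ k ∈ Finset.range n, (if k ≤ N then ε' else 0) := by
      rw [Finset.sum_add_distrib, Finset.sum_const, Finset.card_range, nsmul_eq_mul]
    have step3 : ∑ k ∈ Finset.range n, (if k ≤ N then ε' else 0) ≤ (N+1 : ℝ) := by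
      have : ∑ k ∈ Finset.range n, (if k ≤ N then ε' else 0)
          = ∑ k ∈ (Finset.range n).filter (· ≤ N), ε' := (Finset.sum_filter _ _).symm
      rw [this, Finset.sum_const, nsmul_eq_mul]
      have hcard : ((Finset.range n).filter (· ≤ N)).card ≤ N+1 := by
        have hsub : (Finset.range n).filter (· ≤ N) ⊆ Finset.range (N+1) := by
          intro k hk
          simp only [Finset.mem_filter] at hk
          exact Finset.mem_range.mpr (Nat.lt_succ_of_le hk.2)
        simpa using Finset.card_le_card hsub
      have : (((Finset.range n).filter (· ≤ N)).card : ℝ) ≤ (N+1 : ℝ) := by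
        exact_mod_cast hcard
      nlinarith [hε'pos, hε'le]
    linarith
  have hbound : ∀ n : ℕ, 1 ≤ n →
      T n / n ≤ (T 0 + Ex * (N+1)) / n + (C₁ + Ex * (1 - ε')) := by
    intro n hn
    have hn0 : (0:ℝ) < n := by exact_mod_cast hn
    have h := tele n
    have h2 := hsum n
    have hmul := mul_le_mul_of_nonneg_left h2 hEx
    have hTn : T n ≤ T 0 + Ex*(N+1) + n * (C₁ + Ex*(1-ε')) := by nlinarith
    rw [div_le_iff₀ hn0]
    have hexp : ((T 0 + Ex*(N+1))/n + (C₁ + Ex*(1-ε'))) * n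
        = (T 0 + Ex*(N+1)) + (C₁+Ex*(1-ε'))*(n:ℝ) := by
      field_simp
    rw [hexp]
    linarith
  have hlim : Tendsto (fun n : ℕ => (T 0 + Ex * (N+1)) / n + (C₁ + Ex * (1 - ε')))
      atTop (nhds (0 + (C₁ + Ex*(1-ε')))) :=
    (tendsto_const_div_atTop_nhds_zero_nat _).add tendsto_const_nhds
  have hμle : μ x ≤ 0 + (C₁ + Ex * (1-ε')) := by
    refine le_of_tendsto_of_tendsto (hμ x) hlim ?_
    filter_upwards [eventually_ge_atTop 1] with n hn
    exact hbound n hn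
  have : Ex * (1 - ε') = (1 - ε') * Ex := mul_comm _ _
  linarith
end
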